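/- The density property is expressible in the One-Step Graded μ-Calculus: a Kripke tree (T, Lab) satisfies the OSGμC sentence νX. μY. (◇_{≥2} X) ∨ (◇_{≥1} Y) if and only if T is dense. -/

import Mathlib

/-! ## Trees over ℕ* -/

abbrev Node : Type := List ℕ

/-- `T` is a tree with root `r`: `r ∈ T`, every node extends `r`, and `T` is
prefix-closed above `r`. -/
def IsTreeRooted (T : Set Node) (r : Node) : Prop :=
  r ∈ T ∧ (∀ τ ∈ T, r <+: τ) ∧
    ∀ σ σ' : List ℕ, r ++ σ ∈ T → σ' <+: σ → r ++ σ' ∈ T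

/-- `T ⊆ ℕ*` is a tree. -/
def IsTree (T : Set Node) : Prop := ∃ r : Node, IsTreeRooted T r

/-- `τ'` is a child of `τ` in `T`. -/
def childIn (T : Set Node) (τ τ' : Node) : Prop := τ' ∈ T ∧ ∃ n : ℕ, τ' = τ ++ [n]

/-- every node of `T` has a child in `T`. -/
def NonBlocking (T : Set Node) : Prop := ∀ τ ∈ T, ∃ n : ℕ, τ ++ [n] ∈ T

/-- every node of `T` has finitely many children in `T`. -/
def FinBranching (T : Set Node) : Prop := ∀ τ ∈ T, {τ' : Node | childIn T τ τ'}.Finite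

/-- `S` is a subtree of `T`. -/
def IsSubtree (T S : Set Node) : Prop := S ⊆ T ∧ IsTree S

/-- `P` is a path of `T`: a subtree totally ordered by the child relation
(each node has at most one child in `P`). -/
def IsPathOf (T P : Set Node) : Prop :=
  IsSubtree T P ∧ ∀ τ ∈ P, ∀ n m : ℕ, τ ++ [n] ∈ P → τ ++ [m] ∈ P → n = m

/-- `T` is a chain: a tree in which each node has at most one child. -/
def IsChainTree (T : Set Node) : Prop :=
  IsTree T ∧ ∀ τ ∈ T, ∀ n m : ℕ, τ ++ [n] ∈ T → τ ++ [m] ∈ T → n = m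

/-- `T` is dense: it contains a subtree every node of which has a descendant
in the subtree with at least two distinct children in the subtree. -/
def DenseTree (T : Set Node) : Prop :=
  ∃ S : Set Node, IsSubtree T S ∧ ∀ τ ∈ S, ∃ τ' ∈ S, τ <+: τ' ∧
    ∃ n m : ℕ, n ≠ m ∧ τ' ++ [n] ∈ S ∧ τ' ++ [m] ∈ S

/-- A Kripke tree over `AP`: a non-blocking tree together with a labelling. -/
structure KripkeTree (AP : Type) where
  T : Set Node
  root : Node
  rooted : IsTreeRooted T root
  nonblocking : NonBlocking T
  Lab : Node → Set AP

/-! ## MSOL syntax -/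

inductive MSOL (AP : Type) : Type
  | atom : AP → ℕ → MSOL AP          -- P_a(x)
  | le   : ℕ → ℕ → MSOL AP           -- x ≤ y
  | mem  : ℕ → ℕ → MSOL AP           -- x ∈ X
  | not  : MSOL AP → MSOL AP
  | and  : MSOL AP → MSOL AP → MSOL AP
  | exFO : ℕ → MSOL AP → MSOL AP     -- ∃x. φ
  | exSO : ℕ → MSOL AP → MSOL AP     -- ∃X. φ

namespace MSOL

def freeFO {AP : Type} : MSOL AP → Set ℕ
  | atom _ x => {x}
  | le x y => {x, y}
  | mem x _ => {x}
  | not φ => φ.freeFO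
  | and φ ψ => φ.freeFO ∪ ψ.freeFO
  | exFO x φ => φ.freeFO \ {x}
  | exSO _ φ => φ.freeFO

def freeSO {AP : Type} : MSOL AP → Set ℕ
  | atom _ _ => ∅
  | le _ _ => ∅
  | mem _ X => {X}
  | not φ => φ.freeSO
  | and φ ψ => φ.freeSO ∪ ψ.freeSO
  | exFO _ φ => φ.freeSO
  | exSO X φ => φ.freeSO \ {X}

/-- A sentence is a formula with no free variables. -/
def IsSentence {AP : Type} (φ : MSOL AP) : Prop := φ.freeFO = ∅ ∧ φ.freeSO = ∅

/-- The first-order fragment: no second-order variables. -/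
def IsFO {AP : Type} : MSOL AP → Prop
  | atom _ _ => True
  | le _ _ => True
  | mem _ _ => False
  | not φ => φ.IsFO
  | and φ ψ => φ.IsFO ∧ ψ.IsFO
  | exFO _ φ => φ.IsFO
  | exSO _ _ => False

end MSOL

/-! ## MSOL semantics, parametrized by the range of second-order quantifiers -/

/-- A second-order domain: for each tree, the collection of sets that
second-order quantifiers range over. -/
abbrev SODom : Type := Set Node → Set (Set Node)

def Sat {AP : Type} (D : SODom) (K : KripkeTree AP) :
    (ℕ → Node) → (ℕ → Set Node) → MSOL AP → Prop
  | V1, _,  .atom a x => V1 x ∈ K.T ∧ a ∈ K.Lab (V1 x)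
  | V1, _,  .le x y => V1 x ∈ K.T ∧ V1 y ∈ K.T ∧ V1 x <+: V1 y
  | V1, V2, .mem x X => V1 x ∈ V2 X
  | V1, V2, .not φ => ¬ Sat D K V1 V2 φ
  | V1, V2, .and φ ψ => Sat D K V1 V2 φ ∧ Sat D K V1 V2 ψ
  | V1, V2, .exFO x φ => ∃ τ ∈ K.T, Sat D K (Function.update V1 x τ) V2 φ
  | V1, V2, .exSO X φ => ∃ S ∈ D K.T, Sat D K V1 (Function.update V2 X S) φ

/-- A logic: a syntactic fragment of MSOL together with a second-order domain. -/
structure MLogic (AP : Type) where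
  syn : MSOL AP → Prop
  dom : SODom

namespace MLogic

/-- A Kripke tree satisfies a sentence. -/
def KSat {AP : Type} (L : MLogic AP) (K : KripkeTree AP) (φ : MSOL AP) : Prop :=
  ∃ V1 V2, Sat L.dom K V1 V2 φ

/-- `L ≤ L'` over the class `M`. -/
def Leq {AP : Type} (M : Set (KripkeTree AP)) (L L' : MLogic AP) : Prop :=
  ∀ φ : MSOL AP, φ.IsSentence → L.syn φ →
    ∃ φ' : MSOL AP, φ'.IsSentence ∧ L'.syn φ' ∧
      ∀ K ∈ M, (L.KSat K φ ↔ L'.KSat K φ')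

/-- `L < L'` over the class `M`. -/
def Lt {AP : Type} (M : Set (KripkeTree AP)) (L L' : MLogic AP) : Prop :=
  Leq M L L' ∧ ¬ Leq M L' L

/-- `L ≡ L'` over the class `M`. -/
def EquivExp {AP : Type} (M : Set (KripkeTree AP)) (L L' : MLogic AP) : Prop :=
  Leq M L L' ∧ Leq M L' L

/-- `L` and `L'` are expressively incomparable over the class `M`. -/
def Incomp {AP : Type} (M : Set (KripkeTree AP)) (L L' : MLogic AP) : Prop :=
  ¬ Leq M L L' ∧ ¬ Leq M L' L

end MLogic

/-! ## The concrete logics -/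

def MSOdom : SODom := fun T => {S | S ⊆ T}
def MTLdom : SODom := fun T => {S | S ⊆ T ∧ IsTree S}
def MPLdom : SODom := fun T => {S | IsPathOf T S}
def weakDom (D : SODom) : SODom := fun T => {S | S ∈ D T ∧ S.Finite}
def coweakDom (D : SODom) : SODom := fun T => {S | S ∈ D T ∧ S.Infinite}

def MSO (AP : Type) : MLogic AP := ⟨fun _ => True, MSOdom⟩
def MTL (AP : Type) : MLogic AP := ⟨fun _ => True, MTLdom⟩
def MPL (AP : Type) : MLogic AP := ⟨fun _ => True, MPLdom⟩
def WMSO (AP : Type) : MLogic AP := ⟨fun _ => True, weakDom MSOdom⟩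
def WMTL (AP : Type) : MLogic AP := ⟨fun _ => True, weakDom MTLdom⟩
def WMPL (AP : Type) : MLogic AP := ⟨fun _ => True, weakDom MPLdom⟩
def CoWMSO (AP : Type) : MLogic AP := ⟨fun _ => True, coweakDom MSOdom⟩
def CoWMTL (AP : Type) : MLogic AP := ⟨fun _ => True, coweakDom MTLdom⟩
def CoWMPL (AP : Type) : MLogic AP := ⟨fun _ => True, coweakDom MPLdom⟩
def FOL (AP : Type) : MLogic AP := ⟨MSOL.IsFO, MSOdom⟩

/-! ## Classes of Kripke trees -/

def allKT (AP : Type) : Set (KripkeTree AP) := Set.univ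
def finBrKT (AP : Type) : Set (KripkeTree AP) := {K | FinBranching K.T}
/-- Kripke trees whose underlying tree is an infinite chain
(every node has exactly one child). -/
def chainKT (AP : Type) : Set (KripkeTree AP) :=
  {K | ∀ τ ∈ K.T, ∃! τ' : Node, childIn K.T τ τ'}

/-! ## Graded μ-calculus -/

inductive GMC (AP : Type) : Type
  | ff  : GMC AP
  | tt  : GMC AP
  | atom : AP → GMC AP
  | not : GMC AP → GMC AP
  | and : GMC AP → GMC AP → GMC AP
  | or  : GMC AP → GMC AP → GMC AP
  | var : ℕ → GMC AP
  | dia : ℕ → GMC AP → GMC AP     -- ◇_{≥k} φ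
  | box : ℕ → GMC AP → GMC AP     -- □_{<k} φ
  | mu  : ℕ → GMC AP → GMC AP
  | nu  : ℕ → GMC AP → GMC AP

namespace GMC

/-- The set of children of `τ` in `T`. -/
def childrenIn (T : Set Node) (τ : Node) : Set Node := {τ' : Node | childIn T τ τ'}

/-- `S` contains at least `k` elements. -/
def atLeast (k : ℕ) (S : Set Node) : Prop :=
  ∃ F : Finset Node, F.card = k ∧ ↑F ⊆ S

/-- Denotation of a graded μ-calculus formula in a Kripke tree, under an
assignment of the fixpoint variables to sets of nodes. -/
def denot {AP : Type} (K : KripkeTree AP) : GMC AP → (ℕ → Set Node) → Set Node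
  | .ff, _ => ∅
  | .tt, _ => K.T
  | .atom a, _ => {τ ∈ K.T | a ∈ K.Lab τ}
  | .not φ, V => K.T \ denot K φ V
  | .and φ ψ, V => denot K φ V ∩ denot K ψ V
  | .or φ ψ, V => denot K φ V ∪ denot K ψ V
  | .var X, V => V X
  | .dia k φ, V => {τ ∈ K.T | atLeast k (childrenIn K.T τ ∩ denot K φ V)}
  | .box k φ, V => {τ ∈ K.T | ¬ atLeast k (childrenIn K.T τ \ denot K φ V)}
  | .mu X φ, V => ⋂₀ {W : Set Node | W ⊆ K.T ∧ denot K φ (Function.update V X W) ⊆ W}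
  | .nu X φ, V => ⋃₀ {W : Set Node | W ⊆ K.T ∧ W ⊆ denot K φ (Function.update V X W)}

/-- Free fixpoint variables. -/
def free {AP : Type} : GMC AP → Set ℕ
  | .ff => ∅
  | .tt => ∅
  | .atom _ => ∅
  | .not φ => φ.free
  | .and φ ψ => φ.free ∪ ψ.free
  | .or φ ψ => φ.free ∪ ψ.free
  | .var X => {X}
  | .dia _ φ => φ.free
  | .box _ φ => φ.free
  | .mu X φ => φ.free \ {X}
  | .nu X φ => φ.free \ {X}

/-- Every free occurrence of `X` lies under an even (`b = true`) resp. odd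
(`b = false`) number of negations. -/
def polOK {AP : Type} (X : ℕ) : Bool → GMC AP → Prop
  | _, .ff => True
  | _, .tt => True
  | _, .atom _ => True
  | b, .not φ => polOK X (!b) φ
  | b, .and φ ψ => polOK X b φ ∧ polOK X b ψ
  | b, .or φ ψ => polOK X b φ ∧ polOK X b ψ
  | b, .var Y => Y = X → b = true
  | b, .dia _ φ => polOK X b φ
  | b, .box _ φ => polOK X b φ
  | b, .mu Y φ => Y = X ∨ polOK X b φ
  | b, .nu Y φ => Y = X ∨ polOK X b φ

/-- Every bound variable occurs only positively in the scope of its binder. -/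
def boundPos {AP : Type} : GMC AP → Prop
  | .ff => True
  | .tt => True
  | .atom _ => True
  | .not φ => φ.boundPos
  | .and φ ψ => φ.boundPos ∧ ψ.boundPos
  | .or φ ψ => φ.boundPos ∧ ψ.boundPos
  | .var _ => True
  | .dia _ φ => φ.boundPos
  | .box _ φ => φ.boundPos
  | .mu X φ => φ.boundPos ∧ polOK X true φ
  | .nu X φ => φ.boundPos ∧ polOK X true φ

/-- Every occurrence of every variable (free or bound) is positive. -/
def AllPos {AP : Type} (θ : GMC AP) : Prop :=
  θ.boundPos ∧ ∀ X : ℕ, polOK X true θ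

end GMC

mutual
  /-- Base formulas `Φ[Z,O]` of the One-Step Graded μ-Calculus. -/
  inductive IsBase {AP : Type} : Set ℕ → Set ℕ → GMC AP → Prop
    | ff   : ∀ {Z O : Set ℕ}, IsBase Z O .ff
    | tt   : ∀ {Z O : Set ℕ}, IsBase Z O .tt
    | atom : ∀ {Z O : Set ℕ} (a : AP), IsBase Z O (.atom a)
    | not  : ∀ {Z O : Set ℕ} {φ : GMC AP}, IsBase Z O φ → IsBase Z O (.not φ)
    | and  : ∀ {Z O : Set ℕ} {φ ψ : GMC AP},
        IsBase Z O φ → IsBase Z O ψ → IsBase Z O (.and φ ψ)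
    | or   : ∀ {Z O : Set ℕ} {φ ψ : GMC AP},
        IsBase Z O φ → IsBase Z O ψ → IsBase Z O (.or φ ψ)
    | dia  : ∀ {Z O : Set ℕ} {φ : GMC AP} (k : ℕ),
        IsBase O ∅ φ → IsBase Z O (.dia k φ)
    | box  : ∀ {Z O : Set ℕ} {φ : GMC AP} (k : ℕ),
        IsBase O ∅ φ → IsBase Z O (.box k φ)
    | var  : ∀ {Z O : Set ℕ} {X : ℕ}, X ∈ Z → IsBase Z O (.var X)
    | fix  : ∀ {Z O : Set ℕ} {θ : GMC AP}, IsFix ∅ ∅ θ → IsBase Z O θ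
  /-- Fixpoint formulas `Θ[Z,O]` of the One-Step Graded μ-Calculus. -/
  inductive IsFix {AP : Type} : Set ℕ → Set ℕ → GMC AP → Prop
    | mu : ∀ {Z O : Set ℕ} {X : ℕ} {θ : GMC AP},
        IsFix (Z ∪ {X}) (O ∪ {X}) θ → IsFix Z O (.mu X θ)
    | nu : ∀ {Z O : Set ℕ} {X : ℕ} {θ : GMC AP},
        IsFix (Z ∪ {X}) (O ∪ {X}) θ → IsFix Z O (.nu X θ)
    | base : ∀ {Z O : Set ℕ} {φ : GMC AP}, IsBase Z O φ → IsFix Z O φ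
end

/-- A Kripke tree satisfies a μ-calculus sentence iff its root belongs to its
denotation under the empty assignment. -/
def GKSat {AP : Type} (K : KripkeTree AP) (θ : GMC AP) : Prop :=
  K.root ∈ GMC.denot K θ (fun _ => ∅)

/-! The least fixpoint `μY. ◇_{≥2} X ∨ ◇_{≥1} Y` collects the nodes from which some descendant
has two children in `X`; the greatest fixpoint `νX` then asks for a set `W` of nodes containing
the root, each of which reaches a node with two children in `W`. The downward closure of such a
`W` is a dense subtree, and conversely the downward closure of a dense subtree is such a `W`.
Minimality of the least fixpoint enters by walking back from a branching node to its ancestors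
along `◇_{≥1} Y`. -/

def HasTwoChildrenIn (W : Set Node) (τ : Node) : Prop :=
  ∃ n m : ℕ, n ≠ m ∧ τ ++ [n] ∈ W ∧ τ ++ [m] ∈ W

def downClosure (T W : Set Node) : Set Node := {σ ∈ T | ∃ τ ∈ W, σ <+: τ}

section Trees

variable {T W : Set Node} {r : Node}

lemma subset_downClosure (hWT : W ⊆ T) : W ⊆ downClosure T W :=
  fun τ hτ => ⟨hWT hτ, τ, hτ, List.prefix_refl τ⟩

lemma IsTreeRooted.mem_of_prefix (hT : IsTreeRooted T r) {τ ν σ : Node} (hτ : τ ∈ T)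
    (hσ : σ ∈ T) (hτν : τ <+: ν) (hνσ : ν <+: σ) : ν ∈ T := by
  obtain ⟨α, rfl⟩ := hT.2.1 τ hτ
  obtain ⟨β, rfl⟩ := hτν
  obtain ⟨γ, rfl⟩ := hνσ
  simpa using hT.2.2 (α ++ β ++ γ) (α ++ β) (by simpa using hσ) (List.prefix_append _ _)

lemma IsTreeRooted.downClosure (hT : IsTreeRooted T r) (hrW : r ∈ W) :
    IsTreeRooted (downClosure T W) r := by
  refine ⟨⟨hT.1, r, hrW, List.prefix_refl r⟩, fun τ hτ => hT.2.1 τ hτ.1, ?_⟩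
  rintro σ σ' ⟨hσ, τ, hτW, hστ⟩ hσ'σ
  have hpre : r ++ σ' <+: r ++ σ := (List.prefix_append_right_inj r).mpr hσ'σ
  exact ⟨hT.mem_of_prefix hT.1 hσ (List.prefix_append r σ') hpre, τ, hτW, hpre.trans hστ⟩

lemma IsTreeRooted.mem_of_append_mem {U : Set Node} (hT : IsTreeRooted T r) (hUT : U ⊆ T)
    (hU : ∀ σ ∈ T, ∀ n : ℕ, σ ++ [n] ∈ U → σ ∈ U) {τ : Node} (hτ : τ ∈ T) (ρ : List ℕ)
    (hρ : τ ++ ρ ∈ U) : τ ∈ U := by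
  induction ρ using List.reverseRecOn with
  | nil => simpa using hρ
  | append_singleton ρ n ih =>
    rw [← List.append_assoc] at hρ
    refine ih (hU _ ?_ n hρ)
    exact hT.mem_of_prefix hτ (hUT hρ) (List.prefix_append _ _) (List.prefix_append _ _)

lemma denseTree_of_reaches_branching (hT : IsTreeRooted T r) (hWT : W ⊆ T) (hrW : r ∈ W)
    (hW : ∀ τ ∈ W, ∃ τ' ∈ T, τ <+: τ' ∧ HasTwoChildrenIn W τ') : DenseTree T := by
  refine ⟨downClosure T W, ⟨fun σ hσ => hσ.1, r, hT.downClosure hrW⟩, ?_⟩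
  rintro σ ⟨-, τ, hτW, hστ⟩
  obtain ⟨τ', hτ'T, hττ', n, m, hnm, hn, hm⟩ := hW τ hτW
  exact ⟨τ', ⟨hτ'T, τ' ++ [n], hn, List.prefix_append _ _⟩, hστ.trans hττ', n, m, hnm,
    subset_downClosure hWT hn, subset_downClosure hWT hm⟩

lemma DenseTree.exists_reaches_branching (hT : IsTreeRooted T r) (hd : DenseTree T) :
    ∃ W ⊆ T, r ∈ W ∧ ∀ τ ∈ W, ∃ τ' ∈ T, τ <+: τ' ∧ HasTwoChildrenIn W τ' := by
  obtain ⟨S, ⟨hST, rS, hS⟩, hdense⟩ := hd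
  refine ⟨downClosure T S, fun σ hσ => hσ.1, ⟨hT.1, rS, hS.1, hT.2.1 rS (hST hS.1)⟩, ?_⟩
  rintro τ ⟨-, σ, hσS, hτσ⟩
  obtain ⟨σ', hσ'S, hσσ', n, m, hnm, hn, hm⟩ := hdense σ hσS
  exact ⟨σ', hST hσ'S, hτσ.trans hσσ', n, m, hnm,
    subset_downClosure hST hn, subset_downClosure hST hm⟩

lemma denseTree_iff_exists_reaches_branching (hT : IsTreeRooted T r) :
    DenseTree T ↔ ∃ W ⊆ T, r ∈ W ∧ ∀ τ ∈ W, ∃ τ' ∈ T, τ <+: τ' ∧ HasTwoChildrenIn W τ' :=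
  ⟨DenseTree.exists_reaches_branching hT,
    fun ⟨_, hWT, hrW, hW⟩ => denseTree_of_reaches_branching hT hWT hrW hW⟩

end Trees

namespace GMC

variable {AP : Type} {T W : Set Node} {τ : Node}

lemma atLeast_one_iff {S : Set Node} : atLeast 1 S ↔ S.Nonempty := by
  constructor
  · rintro ⟨F, hF, hFS⟩
    obtain ⟨a, rfl⟩ := Finset.card_eq_one.mp hF
    exact ⟨a, hFS (by simp)⟩
  · rintro ⟨a, ha⟩
    exact ⟨{a}, Finset.card_singleton a, by simpa using ha⟩

lemma atLeast_two_iff {S : Set Node} : atLeast 2 S ↔ ∃ a ∈ S, ∃ b ∈ S, a ≠ b := by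
  constructor
  · rintro ⟨F, hF, hFS⟩
    obtain ⟨a, b, hab, rfl⟩ := Finset.card_eq_two.mp hF
    exact ⟨a, hFS (by simp), b, hFS (by simp), hab⟩
  · rintro ⟨a, ha, b, hb, hab⟩
    refine ⟨{a, b}, Finset.card_pair hab, ?_⟩
    simpa [Set.insert_subset_iff] using ⟨ha, hb⟩

lemma atLeast_one_childrenIn_inter_iff :
    atLeast 1 (childrenIn T τ ∩ W) ↔ ∃ n : ℕ, τ ++ [n] ∈ T ∩ W := by
  simp [atLeast_one_iff, Set.Nonempty, childrenIn, childIn]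

lemma atLeast_two_childrenIn_inter_iff :
    atLeast 2 (childrenIn T τ ∩ W) ↔ HasTwoChildrenIn (T ∩ W) τ := by
  simp only [atLeast_two_iff, HasTwoChildrenIn, childrenIn, childIn, Set.mem_inter_iff,
    Set.mem_ofPred_eq]
  constructor
  · rintro ⟨_, ⟨⟨hnT, n, rfl⟩, hnW⟩, _, ⟨⟨hmT, m, rfl⟩, hmW⟩, hnm⟩
    exact ⟨n, m, fun h => hnm (h ▸ rfl), ⟨hnT, hnW⟩, hmT, hmW⟩
  · rintro ⟨n, m, hnm, ⟨hnT, hnW⟩, hmT, hmW⟩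
    exact ⟨_, ⟨⟨hnT, n, rfl⟩, hnW⟩, _, ⟨⟨hmT, m, rfl⟩, hmW⟩, by simpa using hnm⟩

lemma mem_denot_nu {K : KripkeTree AP} {X : ℕ} {φ : GMC AP} {V : ℕ → Set Node} :
    τ ∈ denot K (nu X φ) V ↔ ∃ W ⊆ K.T, τ ∈ W ∧ W ⊆ denot K φ (Function.update V X W) := by
  simp only [denot, Set.mem_sUnion, Set.mem_ofPred_eq]
  exact ⟨fun ⟨W, ⟨hWT, hW⟩, hτ⟩ => ⟨W, hWT, hτ, hW⟩, fun ⟨W, hWT, hτ, hW⟩ => ⟨W, ⟨hWT, hW⟩, hτ⟩⟩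

lemma denot_or_dia_two_dia_one {K : KripkeTree AP} {X Y : ℕ} (hXY : X ≠ Y)
    (V : ℕ → Set Node) (U : Set Node) :
    denot K (or (dia 2 (var X)) (dia 1 (var Y))) (Function.update V Y U) =
      {τ ∈ K.T | HasTwoChildrenIn (K.T ∩ V X) τ} ∪ {τ ∈ K.T | ∃ n : ℕ, τ ++ [n] ∈ K.T ∩ U} := by
  simp only [denot, Function.update_self, Function.update_of_ne hXY,
    atLeast_two_childrenIn_inter_iff, atLeast_one_childrenIn_inter_iff]

lemma denot_mu_or_dia_two_dia_one {K : KripkeTree AP} {X Y : ℕ} (hXY : X ≠ Y)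
    (V : ℕ → Set Node) :
    denot K (mu Y (or (dia 2 (var X)) (dia 1 (var Y)))) V =
      {τ ∈ K.T | ∃ τ' ∈ K.T, τ <+: τ' ∧ HasTwoChildrenIn (K.T ∩ V X) τ'} := by
  change ⋂₀ {U | U ⊆ K.T ∧ denot K _ (Function.update V Y U) ⊆ U} = _
  simp only [denot_or_dia_two_dia_one hXY]
  apply Set.Subset.antisymm
  · refine Set.sInter_subset_of_mem ⟨fun τ hτ => hτ.1, ?_⟩
    rintro τ (⟨hτ, h2⟩ | ⟨hτ, n, -, -, τ', hτ', hpre, h2⟩)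
    · exact ⟨hτ, τ, hτ, List.prefix_refl τ, h2⟩
    · exact ⟨hτ, τ', hτ', (List.prefix_append τ [n]).trans hpre, h2⟩
  · rintro τ ⟨hτ, _, hτ', ⟨ρ, rfl⟩, h2⟩
    refine Set.mem_sInter.mpr fun U ⟨hUT, hU⟩ => ?_
    refine K.rooted.mem_of_append_mem hUT (fun σ hσ n hn => ?_) hτ ρ (hU (Or.inl ⟨hτ', h2⟩))
    exact hU (Or.inr ⟨hσ, n, hUT hn, hn⟩)

end GMC

/-- the density property is expressible in OSGμC by the sentence
`νX. μY. (◇_{≥2} X) ∨ (◇_{≥1} Y)`. -/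
theorem stmt16 (AP : Type) [Fintype AP] (K : KripkeTree AP) :
    GKSat K (GMC.nu 0 (GMC.mu 1 (GMC.or (GMC.dia 2 (GMC.var 0)) (GMC.dia 1 (GMC.var 1)))))
      ↔ DenseTree K.T := by
  rw [GKSat, GMC.mem_denot_nu, denseTree_iff_exists_reaches_branching K.rooted]
  refine exists_congr fun W => and_congr_right fun hWT => and_congr_right fun _ => ?_
  rw [GMC.denot_mu_or_dia_two_dia_one (by decide), Function.update_self,
    Set.inter_eq_right.mpr hWT]
  exact ⟨fun h τ hτ => (h hτ).2, fun h τ hτ => ⟨hWT hτ, h τ hτ⟩⟩
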